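/- arXiv:q-alg/9712045 — 5 statements merged into one kernel-verified Lean document; each statement's English description precedes it below -/
import Mathlib

section
/- Let A be a symmetric unimodular (m-1)×(m-1) integer matrix, let a₁,…,a_{m-1}, k_m be integers, and let ε ∈ {1,-1}. Then the (m+1)×(m+1) integer matrix whose upper-left block is A, whose last two columns restricted to the first m-1 rows are both equal to the column (a₁,…,a_{m-1}), whose last two rows restricted to the first m-1 columns are both equal to (a₁,…,a_{m-1}), and whose lower-right 2×2 block is [[k_m+ε, k_m],[k_m, k_m-ε]], is unimodular. -/
/-!
Take the Schur complement with respect to the lower-right block `D = !![k + ε, k; k, k - ε]`,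
which is invertible since `det D = -ε ^ 2`. The off-diagonal blocks repeat a single column and
a single row, so `B * D⁻¹ * C` is the sum of the entries of `D⁻¹` times `a ⊗ a`; that sum is
`(det D)⁻¹` times the sum of the entries of `adj D`, which is zero. Hence the determinant is
`det D * det A = -ε ^ 2 * det A = ∓1`.
-/

open Matrix

variable {R : Type*} [CommRing R]

theorem det_fin_two_add_sub (x ε : R) : !![x + ε, x; x, x - ε].det = -ε ^ 2 := by
  rw [det_fin_two_of]
  ring

theorem sum_adjugate_fin_two_add_sub (x ε : R) :
    ∑ i, ∑ j, adjugate !![x + ε, x; x, x - ε] i j = 0 := by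
  simp [adjugate_fin_two_of, Fin.sum_univ_two]
  ring

theorem replicateCol_mul_mul_replicateRow {m n ι : Type*} [Fintype ι] (u : m → R)
    (M : Matrix ι ι R) (v : n → R) :
    replicateCol ι u * M * replicateRow ι v = (∑ i, ∑ j, M i j) • vecMulVec u v := by
  ext p q
  simp only [mul_apply, replicateCol_apply, replicateRow_apply, Matrix.smul_apply, vecMulVec_apply,
    smul_eq_mul, Finset.sum_mul]
  rw [Finset.sum_comm]
  exact Finset.sum_congr rfl fun _ _ => Finset.sum_congr rfl fun _ _ => by ring

theorem det_fromBlocks_replicate_fin_two_add_sub {n : Type*} [Fintype n] [DecidableEq n]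
    (A : Matrix n n R) (u v : n → R) (x ε : R) (hε : IsUnit ε) :
    (fromBlocks A (replicateCol (Fin 2) u) (replicateRow (Fin 2) v)
      !![x + ε, x; x, x - ε]).det = -ε ^ 2 * A.det := by
  set D := !![x + ε, x; x, x - ε]
  have hD : IsUnit D.det := by
    rw [det_fin_two_add_sub]
    exact (hε.pow 2).neg
  let _ := D.invertibleOfIsUnitDet hD
  rw [det_fromBlocks₂₂, invOf_eq_nonsing_inv, inv_def, Matrix.mul_smul, Matrix.smul_mul,
    replicateCol_mul_mul_replicateRow, sum_adjugate_fin_two_add_sub, zero_smul, smul_zero,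
    sub_zero, det_fin_two_add_sub]

theorem blink_linking_matrix_unimodular_general (n : ℕ) (A : Matrix (Fin n) (Fin n) ℤ)
    (hdetA : A.det = 1 ∨ A.det = -1)
    (a : Fin n → ℤ) (k ε : ℤ) (hε : ε = 1 ∨ ε = -1) :
    (Matrix.fromBlocks A
        (Matrix.of fun i (_ : Fin 2) => a i)
        (Matrix.of fun (_ : Fin 2) j => a j)
        !![k + ε, k; k, k - ε]).det = 1 ∨
    (Matrix.fromBlocks A
        (Matrix.of fun i (_ : Fin 2) => a i)
        (Matrix.of fun (_ : Fin 2) j => a j)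
        !![k + ε, k; k, k - ε]).det = -1 := by
  have hε_unit : IsUnit ε := by rcases hε with rfl | rfl <;> simp
  have hε_sq : ε ^ 2 = 1 := by rcases hε with rfl | rfl <;> norm_num
  have hdet : (Matrix.fromBlocks A
      (Matrix.of fun i (_ : Fin 2) => a i)
      (Matrix.of fun (_ : Fin 2) j => a j)
      !![k + ε, k; k, k - ε]).det = -ε ^ 2 * A.det :=
    det_fromBlocks_replicate_fin_two_add_sub A a a k ε hε_unit
  rw [hdet, hε_sq]
  omega

theorem blink_linking_matrix_unimodular (n : ℕ) (A : Matrix (Fin n) (Fin n) ℤ)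
    (hA : A.IsSymm) (hdetA : A.det = 1 ∨ A.det = -1)
    (a : Fin n → ℤ) (k ε : ℤ) (hε : ε = 1 ∨ ε = -1) :
    (Matrix.fromBlocks A
        (Matrix.of fun i (_ : Fin 2) => a i)
        (Matrix.of fun (_ : Fin 2) j => a j)
        !![k + ε, k; k, k - ε]).det = 1 ∨
    (Matrix.fromBlocks A
        (Matrix.of fun i (_ : Fin 2) => a i)
        (Matrix.of fun (_ : Fin 2) j => a j)
        !![k + ε, k; k, k - ε]).det = -1 :=
  blink_linking_matrix_unimodular_general n A hdetA a k ε hε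
end

section
/- Let G be a group, IG the augmentation ideal of the rational group algebra ℚG, and n a positive integer. If g ∈ G satisfies g^k - 1 ∈ (IG)^n for some positive integer k, and additionally g - 1 ∈ (IG)^{n-1}, then g - 1 ∈ (IG)^n. -/
theorem rational_closure_step (G : Type*) [Group G] (n : ℕ) (hn : 1 ≤ n) (g : G)
    (k : ℕ) (hk : 0 < k)
    (h1 : (MonoidAlgebra.of ℚ G g) ^ k - 1 ∈
      (Ideal.span {x : MonoidAlgebra ℚ G | ∃ h : G, x = MonoidAlgebra.of ℚ G h - 1}) ^ n)
    (h2 : MonoidAlgebra.of ℚ G g - 1 ∈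
      (Ideal.span {x : MonoidAlgebra ℚ G | ∃ h : G, x = MonoidAlgebra.of ℚ G h - 1}) ^ (n - 1)) :
    MonoidAlgebra.of ℚ G g - 1 ∈
      (Ideal.span {x : MonoidAlgebra ℚ G | ∃ h : G, x = MonoidAlgebra.of ℚ G h - 1}) ^ n := by
  set R := MonoidAlgebra ℚ G
  set I : Ideal R := Ideal.span {x : R | ∃ h : G, x = MonoidAlgebra.of ℚ G h - 1} with hI
  set x : R := MonoidAlgebra.of ℚ G g - 1 with hxdef
  have hxI : x ∈ I := Ideal.subset_span ⟨g, rfl⟩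
  have hg : MonoidAlgebra.of ℚ G g = x + 1 := by simp [hxdef]
  rw [hg] at h1
  clear_value x
  have hx2 : x * x ∈ I ^ n := by
    have h : x * x ∈ I ^ (n - 1) * I := Ideal.mul_mem_mul h2 hxI
    rwa [← Submodule.pow_succ, Nat.sub_add_cancel hn] at h
  have key : ∀ m : ℕ, (x + 1) ^ m - 1 - m • x ∈ I ^ n := by
    intro m
    induction m with
    | zero => simp
    | succ m ih =>
      have hid : (x + 1) ^ (m + 1) - 1 - (m + 1) • x
          = (x + 1) * ((x + 1) ^ m - 1 - m • x) + m • (x * x) := by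
        rw [pow_succ', succ_nsmul]
        rw [mul_sub, mul_sub, mul_one, mul_smul_comm, add_mul x 1 x, one_mul x]
        simp only [smul_add]
        abel
      rw [hid]
      exact add_mem (Ideal.mul_mem_left _ _ ih) (nsmul_mem hx2 m)
  have hkx : k • x ∈ I ^ n := by
    have h := sub_mem h1 (key k)
    simpa using h
  have hx : x = (algebraMap ℚ R ((k : ℚ)⁻¹)) * (k • x) := by
    rw [nsmul_eq_mul, ← mul_assoc, ← map_natCast (algebraMap ℚ R) k, ← map_mul,
      inv_mul_cancel₀ (by exact_mod_cast hk.ne' : (k : ℚ) ≠ 0), map_one, one_mul]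
  exact hx ▸ Ideal.mul_mem_left _ _ hkx
end

section
/- Let V be a finite-dimensional vector space over a field of characteristic 0 equipped with a nondegenerate alternating bilinear form ω, and let L ⊆ V be a Lagrangian subspace (i.e., L = L^⊥ with respect to ω). Then there exists another Lagrangian subspace L' ⊆ V with V = L ⊕ L'. -/
open LinearMap (BilinForm)

open Module Submodule

theorem lagrangian_has_lagrangian_complement (k : Type*) [Field k] [CharZero k]
    (V : Type*) [AddCommGroup V] [Module k V] [FiniteDimensional k V]
    (B : BilinForm k V) (halt : B.IsAlt) (hnd : B.Nondegenerate)
    (L : Submodule k V) (hL : L = B.orthogonal L) :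
    ∃ L' : Submodule k V, L' = B.orthogonal L' ∧ IsCompl L L' := by
  have hrefl : B.IsRefl := halt.isRefl
  -- L is isotropic
  have hiso : ∀ x ∈ L, ∀ y ∈ L, B x y = 0 := by
    intro x hx y hy
    rw [hL] at hy
    exact hy x hx
  obtain ⟨W, hW⟩ := Submodule.exists_isCompl L
  have hdimLW : finrank k L + finrank k W = finrank k V :=
    Submodule.finrank_add_eq_of_isCompl hW
  have hdimL2 : finrank k L + finrank k L = finrank k V := by
    have h1 := LinearMap.BilinForm.finrank_orthogonal hnd L
    rw [← hL] at h1
    have h2 : finrank k L ≤ finrank k V := Submodule.finrank_le L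
    omega
  have hdimW : finrank k W = finrank k L := by omega
  -- the pairing L × W → k
  set ψ : L →ₗ[k] (W →ₗ[k] k) := (B.compl₂ W.subtype).domRestrict L with hψdef
  have hψ : ∀ (l : L) (w : W), ψ l w = B l w := fun _ _ => rfl
  have hψinj : Function.Injective ψ := by
    rw [← LinearMap.ker_eq_bot, LinearMap.ker_eq_bot']
    intro l hl
    ext
    refine hnd.1 l ?_
    intro v
    have hv : v ∈ L ⊔ W := by rw [hW.sup_eq_top]; trivial
    obtain ⟨a, ha, b, hb, rfl⟩ := Submodule.mem_sup.mp hv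
    have h1 : B l a = 0 := hiso l l.2 a ha
    have h2 : B l b = 0 := by
      have := congrArg (fun f => f ⟨b, hb⟩) hl
      simpa [hψ] using this
    simp [h1, h2]
  have hdimdual : finrank k L = finrank k (W →ₗ[k] k) := by
    rw [show finrank k (W →ₗ[k] k) = finrank k (Module.Dual k W) from rfl,
      Subspace.dual_finrank_eq, hdimW]
  set e := ψ.linearEquivOfInjective hψinj hdimdual with he
  set χ : W →ₗ[k] (W →ₗ[k] k) := (-(2⁻¹ : k)) • ((B.compl₂ W.subtype).domRestrict W) with hχdef
  set φ : W →ₗ[k] L := e.symm.toLinearMap ∘ₗ χ with hφdef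
  have hφ : ∀ w w' : W, B (φ w) w' = -(2⁻¹ : k) * B w w' := by
    intro w w'
    have h1 : ψ (φ w) = χ w := by
      have h0 : ∀ x, ψ x = e x := fun x =>
        (LinearMap.linearEquivOfInjective_apply hψinj hdimdual x).symm
      rw [hφdef]
      simp only [LinearMap.coe_comp, Function.comp_apply, LinearEquiv.coe_coe]
      rw [h0]
      exact e.apply_symm_apply _
    have := congrArg (fun f => f w') h1
    simpa [hψ, hχdef, neg_mul] using this
  set g : W →ₗ[k] V := W.subtype + L.subtype ∘ₗ φ with hgdef
  have hg : ∀ w : W, g w = (w : V) + (φ w : V) := fun _ => rfl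
  set L' := LinearMap.range g with hL'def
  have h2k : (2 : k) ≠ 0 := two_ne_zero
  -- L' is isotropic
  have hiso' : ∀ x ∈ L', ∀ y ∈ L', B x y = 0 := by
    rintro _ ⟨w, rfl⟩ _ ⟨w', rfl⟩
    rw [hg, hg]
    have h1 : B (φ w) (φ w' : V) = 0 := hiso _ (φ w).2 _ (φ w').2
    have h2 : B (φ w) (w' : V) = -(2⁻¹ : k) * B w w' := hφ w w'
    have h3 : B (w : V) (φ w' : V) = 2⁻¹ * B (w' : V) (w : V) := by
      rw [← LinearMap.IsAlt.neg halt (φ w' : V) (w : V), hφ w' w]; ring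
    have h4 : B (w' : V) (w : V) = - B (w : V) (w' : V) := (LinearMap.IsAlt.neg halt _ _).symm
    simp only [map_add, LinearMap.add_apply, h1, h2, h3, h4]
    field_simp
    ring
  have hL'le : L' ≤ B.orthogonal L' := fun y hy => by
    rw [LinearMap.BilinForm.mem_orthogonal_iff]
    intro n hn
    exact hiso' n hn y hy
  have hginj : Function.Injective g := by
    rw [← LinearMap.ker_eq_bot, LinearMap.ker_eq_bot']
    intro w hw
    rw [hg] at hw
    have hwL : (w : V) ∈ L := by
      have hwe : (w : V) = -(φ w : V) := eq_neg_of_add_eq_zero_left hw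
      rw [hwe]; exact neg_mem (φ w).2
    have : (w : V) = 0 := (Submodule.disjoint_def.mp hW.disjoint) _ hwL w.2
    exact Subtype.ext this
  have hdimL' : finrank k L' = finrank k L := by
    rw [hL'def, LinearMap.finrank_range_of_inj hginj, hdimW]
  have hL'eq : L' = B.orthogonal L' := by
    refine Submodule.eq_of_le_of_finrank_le hL'le ?_
    rw [LinearMap.BilinForm.finrank_orthogonal hnd L', hdimL']
    omega
  refine ⟨L', hL'eq, ?_, ?_⟩
  · rw [Submodule.disjoint_def]
    rintro x hxL ⟨w, rfl⟩
    rw [hg] at hxL ⊢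
    have hwL : (w : V) ∈ L := by
      have hwe : (w : V) = ((w : V) + (φ w : V)) - (φ w : V) := by abel
      rw [hwe]
      exact sub_mem hxL (φ w).2
    have hw0 : (w : V) = 0 := (Submodule.disjoint_def.mp hW.disjoint) _ hwL w.2
    have : w = 0 := Subtype.ext hw0
    rw [this]
    simp
  · rw [codisjoint_iff, eq_top_iff]
    intro v _
    have hv : v ∈ L ⊔ W := by rw [hW.sup_eq_top]; trivial
    obtain ⟨a, ha, b, hb, rfl⟩ := Submodule.mem_sup.mp hv
    refine Submodule.mem_sup.mpr ⟨a - (φ ⟨b, hb⟩ : V), sub_mem ha (φ ⟨b, hb⟩).2,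
      g ⟨b, hb⟩, ⟨⟨b, hb⟩, rfl⟩, ?_⟩
    rw [hg]
    abel
end

section
/- Let V be a vector space over a field of characteristic 0 and f : V → V a linear map with f² = 0. Let φ = id + f, and let D : Λ³V → Λ³V be the linear map determined by D(a∧b∧c) = φ(a)∧φ(b)∧φ(c) - a∧b∧c. Then D³(a∧b∧c) = 6 f(a)∧f(b)∧f(c) for all a, b, c ∈ V. -/
/-!
With `D = F - 1` for a ring endomorphism `F`, the twisted Leibniz rule
`D (x * y) = D x * F y + x * D y` holds and `F` fixes `ker D`. So if `D² v = 0`, in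
`D^(n+1) (v * u)` the operator `D` hits `v` at most once, at any of the `n + 1` steps. Inductively, a
product of `n` elements killed by `D²` is killed by `D^(n+1)` and sent by `D^n` to `n!` times the
product of their images under `D`. For `F = Λφ` with `φ = 1 + f` and `f² = 0`, the generators satisfy
`D (ι a) = ι (f a)` and `D² (ι a) = 0`; take `n = 3`.
-/

open ExteriorAlgebra

namespace RingHom

variable {A : Type*} [Ring A] (F : A →+* A)

def subOne : A →+ A := F.toAddMonoidHom - AddMonoidHom.id A

@[simp]
theorem subOne_apply (x : A) : F.subOne x = F x - x := rfl

theorem subOne_apply_comm (x : A) : F.subOne (F x) = F (F.subOne x) := by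
  simp only [subOne_apply, map_sub]

theorem subOne_mul (x y : A) : F.subOne (x * y) = F.subOne x * F y + x * F.subOne y := by
  simp only [subOne_apply, map_mul, sub_mul, mul_sub]
  abel

theorem apply_eq_self_of_subOne_eq_zero {x : A} (hx : F.subOne x = 0) : F x = x :=
  sub_eq_zero.mp hx

variable {F}

theorem iterate_subOne_mul {v : A} (hv : F.subOne (F.subOne v) = 0) (u : A) (n : ℕ) :
    F.subOne^[n + 1] (v * u) =
      v * F.subOne^[n + 1] u + (n + 1) • (F.subOne v * F (F.subOne^[n] u)) := by
  induction n with
  | zero =>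
    rw [zero_add, one_smul, Function.iterate_one, Function.iterate_zero_apply, subOne_mul, add_comm]
  | succ n ih =>
    have hDv : F.subOne (F.subOne v * F (F.subOne^[n] u)) =
        F.subOne v * F (F.subOne^[n + 1] u) := by
      rw [subOne_mul, hv, zero_mul, zero_add, subOne_apply_comm, Function.iterate_succ_apply']
    rw [Function.iterate_succ_apply', ih, map_add, map_nsmul, hDv, subOne_mul,
      ← Function.iterate_succ_apply' F.subOne, Nat.succ_eq_add_one]
    simp only [add_smul, one_smul]
    abel

theorem iterate_subOne_mul_of_iterate_eq_zero {v u : A} (hv : F.subOne (F.subOne v) = 0)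
    {n : ℕ} (hu : F.subOne^[n + 1] u = 0) :
    F.subOne^[n + 1] (v * u) = (n + 1) • (F.subOne v * F.subOne^[n] u) := by
  rw [Function.iterate_succ_apply'] at hu
  rw [iterate_subOne_mul hv, Function.iterate_succ_apply', hu, mul_zero, zero_add,
    apply_eq_self_of_subOne_eq_zero F hu]

theorem iterate_succ_subOne_mul_eq_zero {v u : A} (hv : F.subOne (F.subOne v) = 0)
    {n : ℕ} (hu : F.subOne^[n + 1] u = 0) : F.subOne^[n + 2] (v * u) = 0 := by
  rw [iterate_subOne_mul hv u (n + 1), hu, Function.iterate_succ_apply', hu, map_zero, map_zero,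
    mul_zero, mul_zero, smul_zero, add_zero]

theorem iterate_length_succ_subOne_list_prod_eq_zero {l : List A}
    (hl : ∀ x ∈ l, F.subOne (F.subOne x) = 0) : F.subOne^[l.length + 1] l.prod = 0 := by
  induction l with
  | nil => simp
  | cons x l ih =>
    simp only [List.forall_mem_cons] at hl
    exact iterate_succ_subOne_mul_eq_zero hl.1 (ih hl.2)

theorem iterate_length_subOne_list_prod {l : List A}
    (hl : ∀ x ∈ l, F.subOne (F.subOne x) = 0) :
    F.subOne^[l.length] l.prod = l.length.factorial • (l.map F.subOne).prod := by
  induction l with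
  | nil => simp
  | cons x l ih =>
    simp only [List.forall_mem_cons] at hl
    rw [List.length_cons, List.prod_cons, List.map_cons, List.prod_cons,
      iterate_subOne_mul_of_iterate_eq_zero hl.1 (iterate_length_succ_subOne_list_prod_eq_zero hl.2),
      ih hl.2, mul_smul_comm, smul_smul, Nat.factorial_succ]

end RingHom

theorem cube_of_unipotent_action_on_wedge_general (k : Type*) [Field k]
    (V : Type*) [AddCommGroup V] [Module k V]
    (f : V →ₗ[k] V) (hf : f ∘ₗ f = 0) :
    ∀ a b c : V,
      letI φ : V →ₗ[k] V := LinearMap.id + f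
      letI D : ExteriorAlgebra k V →ₗ[k] ExteriorAlgebra k V :=
        (ExteriorAlgebra.map φ).toLinearMap - LinearMap.id
      D (D (D (ι k a * ι k b * ι k c))) =
        (6 : k) • (ι k (f a) * ι k (f b) * ι k (f c)) := by
  intro a b c
  let F := (ExteriorAlgebra.map (LinearMap.id + f)).toRingHom
  have hι : ∀ x, F.subOne (ι k x) = ι k (f x) := fun x => by simp [F]
  have hι2 : ∀ x, F.subOne (F.subOne (ι k x)) = 0 := fun x => by
    rw [hι, hι, ← LinearMap.comp_apply f f, hf, LinearMap.zero_apply, map_zero]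
  have key := F.iterate_length_subOne_list_prod (l := [ι k a, ι k b, ι k c]) (by
    simp only [List.mem_cons, List.not_mem_nil, or_false]
    rintro _ (rfl | rfl | rfl) <;> apply hι2)
  change F.subOne (F.subOne (F.subOne _)) = _
  simpa [hι, mul_assoc, Nat.factorial, ofNat_smul_eq_nsmul] using key

theorem cube_of_unipotent_action_on_wedge (k : Type*) [Field k] [CharZero k]
    (V : Type*) [AddCommGroup V] [Module k V]
    (f : V →ₗ[k] V) (hf : f ∘ₗ f = 0) :
    ∀ a b c : V,
      letI φ : V →ₗ[k] V := LinearMap.id + f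
      letI D : ExteriorAlgebra k V →ₗ[k] ExteriorAlgebra k V :=
        (ExteriorAlgebra.map φ).toLinearMap - LinearMap.id
      D (D (D (ι k a * ι k b * ι k c))) =
        (6 : k) • (ι k (f a) * ι k (f b) * ι k (f c)) :=
  cube_of_unipotent_action_on_wedge_general k V f hf
end

section
/- Let V be a vector space over a field of characteristic 0, L ⊆ V a subspace, and K = ker(Λ²V → Λ²(V/L)) the kernel of the map induced by the quotient projection. Let f : V → V be linear with f(L) = 0 and im(f) ⊆ L, and let φ = id + f act diagonally on Λ²V. Then (φ - id)(K) ⊆ Λ²L, where Λ²L is identified with its image in Λ²V. -/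
open ExteriorAlgebra

theorem unipotent_action_on_wedge2_kernel (k : Type*) [Field k] [CharZero k]
    (V : Type*) [AddCommGroup V] [Module k V]
    (L : Submodule k V) (f : V →ₗ[k] V)
    (hL : ∀ x ∈ L, f x = 0) (hrange : LinearMap.range f ≤ L) :
    ∀ w ∈ ⋀[k]^2 V, ExteriorAlgebra.map L.mkQ w = 0 →
      ExteriorAlgebra.map (LinearMap.id + f) w - w ∈
        Submodule.map (ExteriorAlgebra.map L.subtype).toLinearMap (⋀[k]^2 L) := by
  intro w hw hker
  -- choose a complement W of L and the projection p onto W along L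
  obtain ⟨W, hWc⟩ := Submodule.exists_isCompl L
  set π : V →ₗ[k] V := L.subtype ∘ₗ (L.projectionOnto W hWc)
  set p : V →ₗ[k] V := LinearMap.id - π with hp
  have hπmem : ∀ v : V, π v ∈ L := fun v => (L.projectionOnto W hWc v).2
  have hpL : L ≤ LinearMap.ker p := by
    intro l hl
    simp only [p, LinearMap.mem_ker, LinearMap.sub_apply, LinearMap.id_apply, π,
      LinearMap.comp_apply, Submodule.projectionOnto_apply_left hWc ⟨l, hl⟩,
      Submodule.subtype_apply, sub_self]
  -- p factors through mkQ, hence map p kills w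
  have hfactor : p = (L.liftQ p hpL) ∘ₗ L.mkQ := (L.liftQ_mkQ p hpL).symm
  have hmapp : ExteriorAlgebra.map p w = 0 := by
    rw [hfactor, ← ExteriorAlgebra.map_comp_map, AlgHom.comp_apply, hker, map_zero]
  -- the key submodule K' = span of ι l * ι v, l ∈ L
  set K' : Submodule k (ExteriorAlgebra k V) :=
    Submodule.span k {x | ∃ l ∈ L, ∃ v : V, x = ι k l * ι k v} with hK'
  -- w ∈ K'
  have hgen : ∀ l ∈ L, ∀ v : V, ι k l * ι k v ∈ K' :=
    fun l hl v => Submodule.subset_span ⟨l, hl, v, rfl⟩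
  have hwK' : w ∈ K' := by
    have key : ∀ u ∈ ⋀[k]^2 V, u - ExteriorAlgebra.map p u ∈ K' := by
      intro u hu
      rw [exteriorPower, pow_two] at hu
      refine Submodule.mul_induction_on hu ?_ ?_
      · rintro _ ⟨a, rfl⟩ _ ⟨b, rfl⟩
        have h1 : ι k a * ι k b - ι k (p a) * ι k (p b)
            = ι k (a - p a) * ι k b - ι k (b - p b) * ι k (p a) := by
          have h3 : ι k (p a) * ι k (b - p b) = -(ι k (b - p b) * ι k (p a)) :=
            eq_neg_of_add_eq_zero_left (ι_add_mul_swap (R := k) (p a) (b - p b))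
          have h4 : ι k (b - p b) * ι k (p a) = -(ι k (p a) * ι k (b - p b)) :=
            eq_neg_of_add_eq_zero_right (ι_add_mul_swap (R := k) (p a) (b - p b))
          simp only [map_sub, sub_mul, mul_sub] at h4 ⊢
          rw [h4]
          abel
        have hpa : a - p a ∈ L := by
          simp only [p, LinearMap.sub_apply, LinearMap.id_apply, sub_sub_cancel]
          exact hπmem a
        have hpb : b - p b ∈ L := by
          simp only [p, LinearMap.sub_apply, LinearMap.id_apply, sub_sub_cancel]
          exact hπmem b
        rw [map_mul, ExteriorAlgebra.map_apply_ι, ExteriorAlgebra.map_apply_ι, h1]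
        exact sub_mem (hgen _ hpa _) (hgen _ hpb _)
      · intro x y hx hy
        have : x + y - ExteriorAlgebra.map p (x + y)
            = (x - ExteriorAlgebra.map p x) + (y - ExteriorAlgebra.map p y) := by
          rw [map_add]; abel
        rw [this]
        exact add_mem hx hy
    have := key w hw
    rwa [hmapp, sub_zero] at this
  -- conclude by span induction on K'
  set T : ExteriorAlgebra k V →ₗ[k] ExteriorAlgebra k V :=
    (ExteriorAlgebra.map (LinearMap.id + f)).toLinearMap - LinearMap.id with hT
  have goal : ∀ x ∈ K', T x ∈
      Submodule.map (ExteriorAlgebra.map L.subtype).toLinearMap (⋀[k]^2 L) := by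
    intro x hx
    refine Submodule.span_induction ?_ ?_ ?_ ?_ hx
    · rintro _ ⟨l, hl, v, rfl⟩
      have hfv : f v ∈ L := hrange ⟨v, rfl⟩
      have hTx : T (ι k l * ι k v) = ι k l * ι k (f v) := by
        simp only [T, LinearMap.sub_apply, AlgHom.toLinearMap_apply, LinearMap.id_apply,
          map_mul, ExteriorAlgebra.map_apply_ι, LinearMap.add_apply, LinearMap.id_apply,
          hL l hl, add_zero, map_add, mul_add]
        abel
      rw [hTx]
      refine ⟨ι k (⟨l, hl⟩ : L) * ι k (⟨f v, hfv⟩ : L), ?_, ?_⟩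
      · rw [exteriorPower, pow_two]
        exact Submodule.mul_mem_mul (LinearMap.mem_range_self _ _)
          (LinearMap.mem_range_self _ _)
      · simp [ExteriorAlgebra.map_apply_ι]
    · simp
    · intro x y _ _ hx hy
      rw [map_add]; exact add_mem hx hy
    · intro c x _ hx
      rw [map_smul]; exact Submodule.smul_mem _ c hx
  have := goal w hwK'
  simpa [T] using this
end
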